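/- The strand-following map on a suitably connected mosaic is a well-defined involution-free permutation of directed connection points: following the strand through a tile from an entry direction yields a unique exit direction, and iterating this map decomposes the set of local strands into disjoint closed cycles (the components of the mosaic link). -/

import Mathlib

/-- The four edge midpoints of a mosaic tile. -/
inductive Edge | top | bottom | left | right
deriving DecidableEq

/-- Connection points of the standard tiles `T_0, …, T_10`. -/
def conn (t : Fin 11) (e : Edge) : Bool :=
  match e with
  | .top    => t.val == 3 || t.val == 4 || t.val == 6 || decide (7 ≤ t.val)
  | .bottom => t.val == 1 || t.val == 2 || t.val == 6 || decide (7 ≤ t.val)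
  | .left   => t.val == 1 || t.val == 4 || t.val == 5 || decide (7 ≤ t.val)
  | .right  => t.val == 2 || t.val == 3 || t.val == 5 || decide (7 ≤ t.val)

/-- An `n`-mosaic is suitably connected: no connection point on the outer boundary,
and connection points match across every interior edge. -/
def SuitablyConnected {n : ℕ} (M : Fin n → Fin n → Fin 11) : Prop :=
  (∀ i j : Fin n,
      (i.val = 0 → conn (M i j) .top = false) ∧
      (i.val = n - 1 → conn (M i j) .bottom = false) ∧
      (j.val = 0 → conn (M i j) .left = false) ∧
      (j.val = n - 1 → conn (M i j) .right = false)) ∧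
  (∀ (i j : Fin n) (h : i.val + 1 < n),
      conn (M i j) .bottom = conn (M ⟨i.val + 1, h⟩ j) .top) ∧
  (∀ (i j : Fin n) (h : j.val + 1 < n),
      conn (M i j) .right = conn (M i ⟨j.val + 1, h⟩) .left)

/-- The opposite edge. -/
def Edge.opp : Edge → Edge
  | .top => .bottom | .bottom => .top | .left => .right | .right => .left

/-- The local strand pairing of a tile: entering through edge `e`, the strand
exits through `exitEdge t e` (arbitrary on non-connection edges). -/
def exitEdge (t : Fin 11) (e : Edge) : Edge :=
  match t.val, e with
  | 1, .bottom => .left  | 1, .left => .bottom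
  | 2, .bottom => .right | 2, .right => .bottom
  | 3, .top => .right    | 3, .right => .top
  | 4, .top => .left     | 4, .left => .top
  | 5, .left => .right   | 5, .right => .left
  | 6, .top => .bottom   | 6, .bottom => .top
  | 7, .top => .left     | 7, .left => .top
  | 7, .bottom => .right | 7, .right => .bottom
  | 8, .top => .right    | 8, .right => .top
  | 8, .bottom => .left  | 8, .left => .bottom
  | 9, .top => .bottom   | 9, .bottom => .top
  | 9, .left => .right   | 9, .right => .left
  | 10, .top => .bottom  | 10, .bottom => .top
  | 10, .left => .right  | 10, .right => .left
  | _, e => e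

/-- `b` is the neighbour of `a` across the edge `e` (positions within the grid). -/
def AdjacentAcross {n : ℕ} (a b : Fin n × Fin n) (e : Edge) : Prop :=
  match e with
  | .top    => b.1.val + 1 = a.1.val ∧ b.2 = a.2
  | .bottom => a.1.val + 1 = b.1.val ∧ a.2 = b.2
  | .left   => b.2.val + 1 = a.2.val ∧ b.1 = a.1
  | .right  => a.2.val + 1 = b.2.val ∧ a.1 = b.1

/-- A point of a mosaic: a tile position together with an edge. -/
abbrev Pt (n : ℕ) := (Fin n × Fin n) × Edge

/-- Two points lie on a common local strand step: either they are the two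
endpoints of a local strand of one tile, or they are the matched connection
points on the two sides of a shared interior edge. -/
def StrandRel {n : ℕ} (M : Fin n → Fin n → Fin 11) (p q : Pt n) : Prop :=
  conn (M p.1.1 p.1.2) p.2 = true ∧
  ((q.1 = p.1 ∧ q.2 = exitEdge (M p.1.1 p.1.2) p.2) ∨
   (q.2 = Edge.opp p.2 ∧ conn (M q.1.1 q.1.2) q.2 = true ∧ AdjacentAcross p.1 q.1 p.2))

/-- The connection points of a mosaic. -/
def ConnPts {n : ℕ} (M : Fin n → Fin n → Fin 11) :=
  {p : Pt n // conn (M p.1.1 p.1.2) p.2 = true}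

/-- Connection points on the same link component are identified. -/
def compSetoid {n : ℕ} (M : Fin n → Fin n → Fin 11) : Setoid (ConnPts M) where
  r a b := Relation.EqvGen (StrandRel M) a.1 b.1
  iseqv := ⟨fun _ => Relation.EqvGen.refl _, fun h => Relation.EqvGen.symm _ _ h,
    fun h₁ h₂ => Relation.EqvGen.trans _ _ _ h₁ h₂⟩

/-- The number of link components of a mosaic. -/
noncomputable def numComponents {n : ℕ} (M : Fin n → Fin n → Fin 11) : ℕ :=
  Nat.card (Quotient (compSetoid M))

/-- The directed strand-following step: entering tile `p.1` through edge `p.2`,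
the strand exits through `exitEdge` and enters the adjacent tile `q`. -/
def DirStep {n : ℕ} (M : Fin n → Fin n → Fin 11) (p q : Pt n) : Prop :=
  q.2 = Edge.opp (exitEdge (M p.1.1 p.1.2) p.2) ∧
  AdjacentAcross p.1 q.1 (exitEdge (M p.1.1 p.1.2) p.2)

instance : Fintype Edge :=
  ⟨⟨([.top, .bottom, .left, .right] : List Edge), by decide⟩, fun x => by cases x <;> decide⟩

instance {n : ℕ} (M : Fin n → Fin n → Fin 11) : Finite (ConnPts M) := by
  unfold ConnPts; infer_instance

lemma conn_exit (t : Fin 11) (e : Edge) (h : conn t e = true) :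
    conn t (exitEdge t e) = true := by revert t e h; decide

lemma exit_exit (t : Fin 11) (e : Edge) (h : conn t e = true) :
    exitEdge t (exitEdge t e) = e := by revert t e h; decide

lemma opp_inj : Function.Injective Edge.opp := by decide

lemma adj_unique {n : ℕ} {a b c : Fin n × Fin n} {e : Edge}
    (h1 : AdjacentAcross a b e) (h2 : AdjacentAcross a c e) : b = c := by
  cases e <;>
    (obtain ⟨h1a, h1b⟩ := h1; obtain ⟨h2a, h2b⟩ := h2;
     refine Prod.ext ?_ ?_ <;> first
       | (apply Fin.ext; omega)
       | (first | exact h1b.trans h2b.symm | exact h1b.symm.trans h2b)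
       | omega)

lemma adj_unique' {n : ℕ} {a b c : Fin n × Fin n} {e : Edge}
    (h1 : AdjacentAcross a c e) (h2 : AdjacentAcross b c e) : a = b := by
  cases e <;>
    (obtain ⟨h1a, h1b⟩ := h1; obtain ⟨h2a, h2b⟩ := h2;
     refine Prod.ext ?_ ?_ <;> first
       | (apply Fin.ext; omega)
       | (first | exact h1b.trans h2b.symm | exact h1b.symm.trans h2b)
       | omega)

lemma adj_irrefl {n : ℕ} {a : Fin n × Fin n} {e : Edge}
    (h : AdjacentAcross a a e) : False := by
  cases e <;> (have := h.1; omega)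

lemma step_unique {n : ℕ} {M : Fin n → Fin n → Fin 11} {p q q' : Pt n}
    (h1 : DirStep M p q) (h2 : DirStep M p q') : q = q' :=
  Prod.ext (adj_unique h1.2 h2.2) (h1.1.trans h2.1.symm)

lemma step_inj {n : ℕ} {M : Fin n → Fin n → Fin 11} {p q r : Pt n}
    (hp : conn (M p.1.1 p.1.2) p.2 = true) (hq : conn (M q.1.1 q.1.2) q.2 = true)
    (h1 : DirStep M p r) (h2 : DirStep M q r) : p = q := by
  have hee : exitEdge (M p.1.1 p.1.2) p.2 = exitEdge (M q.1.1 q.1.2) q.2 :=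
    opp_inj (h1.1.symm.trans h2.1)
  have hpos : p.1 = q.1 := adj_unique' h1.2 (hee ▸ h2.2)
  have he2 : p.2 = q.2 := by
    have := exit_exit _ _ hp
    have h2' := exit_exit _ _ hq
    rw [← this, hee, hpos, h2']
  exact Prod.ext hpos he2

lemma step_exists {n : ℕ} (M : Fin n → Fin n → Fin 11) (hM : SuitablyConnected M)
    (p : Pt n) (hp : conn (M p.1.1 p.1.2) p.2 = true) :
    ∃ q : Pt n, DirStep M p q ∧ conn (M q.1.1 q.1.2) q.2 = true := by
  obtain ⟨⟨i, j⟩, e⟩ := p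
  simp only at hp
  have hc' : conn (M i j) (exitEdge (M i j) e) = true := conn_exit _ _ hp
  obtain ⟨hbd, hv, hh⟩ := hM
  unfold DirStep
  cases he' : exitEdge (M i j) e with
  | top =>
    rw [he'] at hc'
    have hi0 : i.val ≠ 0 := fun h0 => by simp [(hbd i j).1 h0] at hc'
    have hlt : i.val - 1 + 1 < n := by have := i.isLt; omega
    set i' : Fin n := ⟨i.val - 1, by omega⟩ with hi'
    have hieq : (⟨i'.val + 1, hlt⟩ : Fin n) = i := Fin.ext (by simp [hi']; omega)
    have hcq : conn (M i' j) .bottom = true := by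
      rw [hv i' j hlt, hieq]; exact hc'
    exact ⟨((i', j), .bottom), ⟨⟨rfl, by simp [AdjacentAcross, hi']; omega⟩, hcq⟩⟩
  | bottom =>
    rw [he'] at hc'
    have hi0 : i.val ≠ n - 1 := fun h0 => by simp [(hbd i j).2.1 h0] at hc'
    have hlt : i.val + 1 < n := by have := i.isLt; omega
    set i' : Fin n := ⟨i.val + 1, hlt⟩ with hi'
    have hcq : conn (M i' j) .top = true := by rw [← hv i j hlt]; exact hc'
    exact ⟨((i', j), .top), ⟨⟨rfl, by simp [AdjacentAcross, hi']⟩, hcq⟩⟩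
  | left =>
    rw [he'] at hc'
    have hj0 : j.val ≠ 0 := fun h0 => by simp [(hbd i j).2.2.1 h0] at hc'
    have hlt : j.val - 1 + 1 < n := by have := j.isLt; omega
    set j' : Fin n := ⟨j.val - 1, by omega⟩ with hj'
    have hjeq : (⟨j'.val + 1, hlt⟩ : Fin n) = j := Fin.ext (by simp [hj']; omega)
    have hcq : conn (M i j') .right = true := by
      rw [hh i j' hlt, hjeq]; exact hc'
    exact ⟨((i, j'), .right), ⟨⟨rfl, by simp [AdjacentAcross, hj']; omega⟩, hcq⟩⟩
  | right =>
    rw [he'] at hc'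
    have hj0 : j.val ≠ n - 1 := fun h0 => by simp [(hbd i j).2.2.2 h0] at hc'
    have hlt : j.val + 1 < n := by have := j.isLt; omega
    set j' : Fin n := ⟨j.val + 1, hlt⟩ with hj'
    have hcq : conn (M i j') .left = true := by rw [← hh i j hlt]; exact hc'
    exact ⟨((i, j'), .left), ⟨⟨rfl, by simp [AdjacentAcross, hj']⟩, hcq⟩⟩

/-- The strand-following map on a suitably connected mosaic is a well-defined
fixed-point-free permutation of the directed connection points: entering a tile
through a connection point determines a unique exit, leading to the matched
connection point of the adjacent tile; iterating this permutation decomposes the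
set of local strands into disjoint closed cycles (the components of the mosaic link). -/
theorem strand_following_permutation {n : ℕ} (M : Fin n → Fin n → Fin 11)
    (hM : SuitablyConnected M) :
    ∃! σ : Equiv.Perm (ConnPts M),
      (∀ d : ConnPts M, DirStep M d.1 (σ d).1) ∧ (∀ d : ConnPts M, σ d ≠ d) := by
  have hstep : ∀ d : ConnPts M, ∃ q : ConnPts M, DirStep M d.1 q.1 := by
    intro d
    obtain ⟨q, hq, hcq⟩ := step_exists M hM d.1 d.2
    exact ⟨⟨q, hcq⟩, hq⟩
  choose f hf using hstep
  have hinj : Function.Injective f := by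
    intro a b hab
    have hb := hf b
    rw [← hab] at hb
    exact Subtype.ext (step_inj a.2 b.2 (hf a) hb)
  let σ : Equiv.Perm (ConnPts M) :=
    Equiv.ofBijective f (Finite.injective_iff_bijective.mp hinj)
  have hσ : ∀ d : ConnPts M, DirStep M d.1 (σ d).1 := fun d => hf d
  refine ⟨σ, ⟨hσ, fun d hd => ?_⟩, fun σ' hσ' => ?_⟩
  · have := (hσ d).2
    rw [hd] at this
    exact adj_irrefl this
  · exact Equiv.ext fun d => Subtype.ext (step_unique (hσ'.1 d) (hσ d))
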